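/- Let (R, m_R) be a Noetherian local domain with fraction field K such that the powers of m_R define a valuation v on K, and let V = ord_R be its valuation ring. Let (S, m_S) be a local domain birationally dominating R such that V dominates S. If the powers of m_S define a valuation w on K, then w = v; in particular, the order valuation ring ord_S of S equals V. -/

import Mathlib

/-- A commutative ring is regular local if it is Noetherian, local, and its maximal
ideal can be generated by `krullDim` many elements. -/
def IsRegularLocal (A : Type*) [CommRing A] : Prop :=
  IsNoetherianRing A ∧ ∃ h : IsLocalRing A, ∃ s : Finset A,
    (s.card : WithBot (WithTop ℕ)) = ringKrullDim A ∧
    Ideal.span (s : Set A) = @IsLocalRing.maximalIdeal A _ h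

namespace Blowup

variable {K : Type*} [Field K]

/-- The set of nonunits of a subring `S` of a field `K`. -/
def nonunitsIn (S : Subring K) : Set K := {x : K | x ∈ S ∧ (x = 0 ∨ x⁻¹ ∉ S)}

/-- `mT` is the maximal ideal of the subring `T` of `K`, and `T` is local:
the ideal `mT` consists exactly of the nonunits of `T`. -/
def IsMaxIdeal (T : Subring K) (mT : Ideal T) : Prop :=
  ∀ t : T, t ∈ mT ↔ (t : K) ∈ nonunitsIn T

/-- The local ring `V` dominates the local ring `S` (as subrings of `K`):
`S ⊆ V` and the nonunits (= maximal ideal) of `V` contract to those of `S`. -/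
def Dominates (S V : Subring K) : Prop :=
  S ≤ V ∧ ∀ x : K, x ∈ S → (x ∈ nonunitsIn V ↔ x ∈ nonunitsIn S)

/-- The localization of a subring `A` of `K` at a prime ideal `P`, as a subring of `K`. -/
def locAt (A : Subring K) (P : Ideal A) (hP : P.IsPrime) : Subring K where
  carrier := {x : K | ∃ a b : A, b ∉ P ∧ (b : K) * x = (a : K)}
  zero_mem' := ⟨0, 1, fun h => hP.ne_top (Ideal.eq_top_of_isUnit_mem _ h isUnit_one), by simp⟩
  one_mem' := ⟨1, 1, fun h => hP.ne_top (Ideal.eq_top_of_isUnit_mem _ h isUnit_one), by simp⟩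
  add_mem' := by
    rintro x y ⟨a₁, b₁, hb₁, h₁⟩ ⟨a₂, b₂, hb₂, h₂⟩
    refine ⟨a₁ * b₂ + a₂ * b₁, b₁ * b₂, fun h => ?_, ?_⟩
    · rcases hP.mem_or_mem h with h | h
      exacts [hb₁ h, hb₂ h]
    · push_cast
      linear_combination (b₂ : K) * h₁ + (b₁ : K) * h₂
  mul_mem' := by
    rintro x y ⟨a₁, b₁, hb₁, h₁⟩ ⟨a₂, b₂, hb₂, h₂⟩
    refine ⟨a₁ * a₂, b₁ * b₂, fun h => ?_, ?_⟩
    · rcases hP.mem_or_mem h with h | h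
      exacts [hb₁ h, hb₂ h]
    · push_cast
      linear_combination ((b₂ : K) * y) * h₁ + (a₁ : K) * h₂
  neg_mem' := by
    rintro x ⟨a, b, hb, h⟩
    exact ⟨-a, b, hb, by push_cast; linear_combination -h⟩

/-- The chart `R[I/a]`: the subring of `K` generated by `R` and the fractions `u/a`, `u ∈ I`. -/
def chart (R : Subring K) (I : Ideal R) (a : R) : Subring K :=
  Subring.closure ((R : Set K) ∪ {x : K | ∃ u : R, u ∈ I ∧ x = (u : K) / (a : K)})

/-- The integral closure of a subring of `K` in `K`, as a subring of `K`. -/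
def intCl (A : Subring K) : Subring K := (integralClosure A K).toSubring

/-- The chart `A_a = overline{R[I/a]}` of the normalized blowup of `I`. -/
def normChart (R : Subring K) (I : Ideal R) (a : R) : Subring K :=
  intCl (chart R I a)

/-- The ideal `P` of `A` lies over the ideal `m` of `R` (i.e. `P ∩ R = m`). -/
def LiesOver (A : Subring K) (P : Ideal A) (R : Subring K) (m : Ideal R) : Prop :=
  ∀ r : R, ((r : K) ∈ Subtype.val '' (P : Set A)) ↔ r ∈ m

/-- `S` is a local ring of the normalized blowup `Proj overline{R[It]}`,
i.e. `S = (A_a)_P` for some nonzero `a ∈ I` and prime `P` of `A_a`. -/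
def IsBlowupPoint (R : Subring K) (I : Ideal R) (S : Subring K) : Prop :=
  ∃ a : R, a ≠ 0 ∧ a ∈ I ∧ ∃ (P : Ideal (normChart R I a)) (hP : P.IsPrime),
    S = locAt (normChart R I a) P hP

/-- `S` is a local ring of the normalized blowup `Proj overline{R[It]}` dominating `R`,
i.e. `S = (A_a)_P` for some nonzero `a ∈ I` and prime `P` of `A_a` with `P ∩ R = m`. -/
def IsBlowupLocalRing (R : Subring K) (I m : Ideal R) (S : Subring K) : Prop :=
  ∃ a : R, a ≠ 0 ∧ a ∈ I ∧ ∃ (P : Ideal (normChart R I a)) (hP : P.IsPrime),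
    LiesOver (normChart R I a) P R m ∧ S = locAt (normChart R I a) P hP

/-- The set of Rees valuation rings of `I`: DVRs of the form `(A_a)_P` with `P ∩ R = m`. -/
def reesSet (R : Subring K) (m I : Ideal R) : Set (Subring K) :=
  {V | IsDiscreteValuationRing V ∧ ∃ a : R, a ≠ 0 ∧ a ∈ I ∧
    ∃ (P : Ideal (normChart R I a)) (hP : P.IsPrime),
      LiesOver (normChart R I a) P R m ∧ V = locAt (normChart R I a) P hP}

/-- The `mT`-adic order of an element `t` of `T`. -/
noncomputable def ordfn (T : Subring K) (mT : Ideal T) (t : T) : ℕ :=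
  sSup {n : ℕ | t ∈ mT ^ n}

/-- `V` is the order valuation ring of the (regular) local ring `(T, mT)`:
the discrete valuation ring consisting of `0` and all fractions `a/b` of elements
of `T` with `ord a ≥ ord b`. -/
def IsOrdValRing (T : Subring K) (mT : Ideal T) (V : Subring K) : Prop :=
  IsDiscreteValuationRing V ∧ T ≤ V ∧
    ∀ x : K, x ∈ V ↔ (x = 0 ∨ ∃ a b : T, b ≠ 0 ∧
      ordfn T mT b ≤ ordfn T mT a ∧ x = (a : K) / (b : K))

/-- The extension `I·S` of an ideal `I` of `R` to an overring `S` (subrings of `K`). -/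
def extIdeal (R S : Subring K) (I : Ideal R) : Ideal S :=
  Ideal.span {s : S | (s : K) ∈ Subtype.val '' (I : Set R)}

/-- `J` is the transform `I^S` of the ideal `I` of `R` in `S`: `J = a⁻¹(IS)` where
`aS` is the smallest principal ideal of `S` containing `IS`. -/
def IsIdealTransform (R S : Subring K) (I : Ideal R) (J : Ideal S) : Prop :=
  ∃ a : S, extIdeal R S I ≤ Ideal.span {a} ∧
    (∀ b : S, extIdeal R S I ≤ Ideal.span {b} → Ideal.span {a} ≤ Ideal.span {b}) ∧
    ∀ s : S, s ∈ J ↔ a * s ∈ extIdeal R S I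

/-- `T'` is a local quadratic transform of the regular local ring `T`:
`T' = (T[m_T/x])_Q` for some `x ∈ m_T \ m_T²` and prime `Q` of `T[m_T/x]` lying over `m_T`. -/
def IsQuadraticTransform (T T' : Subring K) : Prop :=
  IsRegularLocal T ∧ ∃ (mT : Ideal T) (x : T), IsMaxIdeal T mT ∧ x ∈ mT ∧ x ∉ mT ^ 2 ∧
    ∃ (Q : Ideal (chart T mT x)) (hQ : Q.IsPrime),
      LiesOver (chart T mT x) Q T mT ∧ T' = locAt (chart T mT x) Q hQ

/-- `S` is infinitely near to `R`: `dim S ≥ 2` and `S` is obtained from `R` by a finite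
(possibly empty) sequence of local quadratic transforms. -/
def InfinitelyNear (R S : Subring K) : Prop :=
  Relation.ReflTransGen (IsQuadraticTransform (K := K)) R S ∧
    2 ≤ ringKrullDim S

/-- `S` is a base point of the ideal `I` of `R`: `S` is obtained from `R` by a finite
sequence of local quadratic transforms and the transform `I^S` is a proper ideal of `S`. -/
def IsBasePoint (R : Subring K) (I : Ideal R) (S : Subring K) : Prop :=
  Relation.ReflTransGen (IsQuadraticTransform (K := K)) R S ∧
    ∃ J : Ideal S, IsIdealTransform R S I J ∧ J ≠ ⊤

/-- The ideal `I` of `R` is finitely supported: it has only finitely many base points. -/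
def FinitelySupported (R : Subring K) (I : Ideal R) : Prop :=
  {S : Subring K | IsBasePoint R I S}.Finite

/-- The ideal `I` is `m`-primary. -/
def IsPrimaryFor (R : Subring K) (I m : Ideal R) : Prop :=
  I.IsPrimary ∧ I.radical = m

/-- The function `v` on (nonzero elements of) `K` is an additive valuation
extending the `mT`-adic order function of `T`. -/
def IsOrderValuation (T : Subring K) (mT : Ideal T) (v : K → ℤ) : Prop :=
  (∀ x y : K, x ≠ 0 → y ≠ 0 → v (x * y) = v x + v y) ∧
  (∀ x y : K, x ≠ 0 → y ≠ 0 → x + y ≠ 0 → min (v x) (v y) ≤ v (x + y)) ∧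
  (∀ t : T, (t : K) ≠ 0 → v (t : K) = ordfn T mT t)

end Blowup

/-!
The `m_S`-adic order is at most `v` on `S`, because `v ≥ 1` on `m_S` and `v ≥ 0` on `S`; so `w ≤ v`
on `S`. Conversely, `m_R ⊆ m_S` gives `ord_R ≤ ord_S` on `R`, i.e. `v ≤ w` there. Thus `w = v`
on `R`, hence on its fraction field `K`.
-/

namespace Blowup

variable {K : Type*} [Field K]

def IsAddValuation (v : K → ℤ) : Prop :=
  (∀ x y : K, x ≠ 0 → y ≠ 0 → v (x * y) = v x + v y) ∧
  (∀ x y : K, x ≠ 0 → y ≠ 0 → x + y ≠ 0 → min (v x) (v y) ≤ v (x + y))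

theorem IsOrderValuation.isAddValuation {T : Subring K} {mT : Ideal T} {v : K → ℤ}
    (hv : IsOrderValuation T mT v) : IsAddValuation v :=
  ⟨hv.1, hv.2.1⟩

theorem mem_pow_ordfn {T : Subring K} {mT : Ideal T} {t : T}
    (hbdd : BddAbove {n : ℕ | t ∈ mT ^ n}) : t ∈ mT ^ ordfn T mT t :=
  Nat.sSup_mem ⟨0, by simp⟩ hbdd

theorem le_ordfn {T : Subring K} {mT : Ideal T} {t : T} {n : ℕ}
    (hbdd : BddAbove {n : ℕ | t ∈ mT ^ n}) (ht : t ∈ mT ^ n) : n ≤ ordfn T mT t :=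
  le_csSup hbdd ht

section NonnegOnSubring

variable {S : Subring K} {mS : Ideal S} {v : K → ℤ}

theorem le_val_of_mem_pow (hv : IsAddValuation v) (hnn : ∀ s : S, (s : K) ≠ 0 → 0 ≤ v s)
    (hpos : ∀ s ∈ mS, (s : K) ≠ 0 → 1 ≤ v s) (n : ℕ) {s : S} (hs : s ∈ mS ^ n)
    (hs0 : (s : K) ≠ 0) : (n : ℤ) ≤ v s := by
  induction n generalizing s with
  | zero => simpa using hnn s hs0
  | succ n ih =>
    rw [pow_succ] at hs
    refine Submodule.mul_induction_on
      (C := fun x : S => (x : K) ≠ 0 → ((n + 1 : ℕ) : ℤ) ≤ v x) hs ?_ ?_ hs0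
    · intro a ha b hb hab
      push_cast at hab ⊢
      rw [hv.1 _ _ (left_ne_zero_of_mul hab) (right_ne_zero_of_mul hab)]
      linarith [ih ha (left_ne_zero_of_mul hab), hpos b hb (right_ne_zero_of_mul hab)]
    · intro x y hx hy hxy
      push_cast at hxy ⊢
      by_cases hx0 : (x : K) = 0
      · rw [hx0, zero_add] at hxy ⊢; exact hy hxy
      by_cases hy0 : (y : K) = 0
      · rw [hy0, add_zero] at hxy ⊢; exact hx hxy
      exact (le_min (hx hx0) (hy hy0)).trans (hv.2 _ _ hx0 hy0 hxy)

theorem bddAbove_pow_mem (hv : IsAddValuation v) (hnn : ∀ s : S, (s : K) ≠ 0 → 0 ≤ v s)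
    (hpos : ∀ s ∈ mS, (s : K) ≠ 0 → 1 ≤ v s) {s : S} (hs0 : (s : K) ≠ 0) :
    BddAbove {n : ℕ | s ∈ mS ^ n} :=
  ⟨(v s).toNat, fun n hn => by have := le_val_of_mem_pow hv hnn hpos n hn hs0; omega⟩

theorem ordfn_le_val (hv : IsAddValuation v) (hnn : ∀ s : S, (s : K) ≠ 0 → 0 ≤ v s)
    (hpos : ∀ s ∈ mS, (s : K) ≠ 0 → 1 ≤ v s) {s : S} (hs0 : (s : K) ≠ 0) :
    (ordfn S mS s : ℤ) ≤ v s :=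
  le_val_of_mem_pow hv hnn hpos _ (mem_pow_ordfn (bddAbove_pow_mem hv hnn hpos hs0)) hs0

end NonnegOnSubring

theorem ordfn_le_ordfn_inclusion {R S : Subring K} (hRS : R ≤ S) {mR : Ideal R} {mS : Ideal S}
    (hm : mR ≤ mS.comap (Subring.inclusion hRS)) {r : R}
    (hbdd : BddAbove {n : ℕ | Subring.inclusion hRS r ∈ mS ^ n}) :
    ordfn R mR r ≤ ordfn S mS (Subring.inclusion hRS r) := by
  have hpow : ∀ n, r ∈ mR ^ n → Subring.inclusion hRS r ∈ mS ^ n := fun n hr =>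
    Ideal.pow_right_mono (Ideal.map_le_iff_le_comap.mpr hm) n
      (Ideal.map_pow (Subring.inclusion hRS) mR n ▸ Ideal.mem_map_of_mem _ hr)
  exact le_ordfn hbdd (hpow _ (mem_pow_ordfn (hbdd.mono hpow)))

theorem IsAddValuation.eq_of_eq_on_fractionRing {R : Subring K} [IsFractionRing R K]
    {v w : K → ℤ} (hv : IsAddValuation v) (hw : IsAddValuation w)
    (hR : ∀ r : R, (r : K) ≠ 0 → w r = v r) {x : K} (hx : x ≠ 0) : w x = v x := by
  obtain ⟨a, b, hb, rfl⟩ := IsFractionRing.div_surjective (A := R) x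
  have hb0 : (b : K) ≠ 0 := IsFractionRing.to_map_ne_zero_of_mem_nonZeroDivisors hb
  have ha0 : (a : K) ≠ 0 := (div_ne_zero_iff.mp hx).1
  have hab : (a : K) = (algebraMap R K a / algebraMap R K b) * b := (div_mul_cancel₀ _ hb0).symm
  have hw' := hab ▸ hw.1 _ _ hx hb0
  have hv' := hab ▸ hv.1 _ _ hx hb0
  linarith [hR a ha0, hR b hb0]

end Blowup

open Blowup in
theorem statement11_general {K : Type*} [Field K] (R : Subring K)
    (hfracR : IsFractionRing R K)
    (mR : Ideal R)
    (v : K → ℤ) (hv : IsOrderValuation R mR v)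
    (S : Subring K) (hRS : R ≤ S)
    (mS : Ideal S) (hmS : IsMaxIdeal S mS)
    -- `S` birationally dominates `R`: `m_R ⊆ m_S`
    (hbir : ∀ r : R, r ∈ mR → (r : K) ∈ nonunitsIn S)
    -- the valuation ring `V` of `v` contains `S` ...
    (hSV : ∀ x : K, x ∈ S → x ≠ 0 → 0 ≤ v x)
    -- ... and dominates `S`: the maximal ideal `{v > 0}` of `V` contracts to `m_S`
    (hVdom : ∀ x : K, x ∈ S → x ≠ 0 → (0 < v x ↔ x ∈ nonunitsIn S))
    (w : K → ℤ) (hw : IsOrderValuation S mS w) :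
    (∀ x : K, x ≠ 0 → w x = v x) ∧
      {x : K | x = 0 ∨ 0 ≤ w x} = {x : K | x = 0 ∨ 0 ≤ v x} := by
  have hnn : ∀ s : S, (s : K) ≠ 0 → 0 ≤ v s := fun s hs => hSV s s.2 hs
  have hpos : ∀ s ∈ mS, (s : K) ≠ 0 → 1 ≤ v s := fun s hs hs0 =>
    (hVdom s s.2 hs0).mpr ((hmS s).mp hs)
  have hm : mR ≤ mS.comap (Subring.inclusion hRS) := fun r hr => (hmS _).mpr (hbir r hr)
  have hwv : ∀ r : R, (r : K) ≠ 0 → w r = v r := by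
    intro r hr
    have hr' : ((Subring.inclusion hRS r : S) : K) ≠ 0 := hr
    have hwS : w r = ordfn S mS (Subring.inclusion hRS r) := hw.2.2 _ hr'
    apply le_antisymm
    · exact hwS ▸ ordfn_le_val hv.isAddValuation hnn hpos hr'
    · rw [hv.2.2 r hr, hwS]
      exact_mod_cast ordfn_le_ordfn_inclusion hRS hm
        (bddAbove_pow_mem hv.isAddValuation hnn hpos hr')
  have hwvK : ∀ x : K, x ≠ 0 → w x = v x := fun x hx =>
    hv.isAddValuation.eq_of_eq_on_fractionRing hw.isAddValuation hwv hx
  refine ⟨hwvK, Set.ext fun x => ?_⟩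
  rcases eq_or_ne x 0 with rfl | hx
  · simp
  · simp [hx, hwvK x hx]

open Blowup in
/-- (Proposition 5.6) Let `(R, m_R)` be a Noetherian local domain with
fraction field `K` whose maximal-ideal powers define a valuation `v`, with valuation ring
`V = ord_R`. Let `(S, m_S)` be a local domain birationally dominating `R` that is
dominated by `V`. If the powers of `m_S` define a valuation `w`, then `w = v`; in
particular `ord_S = V`. -/
theorem statement11 {K : Type*} [Field K] (R : Subring K)
    (hnoeth : IsNoetherianRing R) (hfracR : IsFractionRing R K)
    (mR : Ideal R) (hmR : IsMaxIdeal R mR)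
    (v : K → ℤ) (hv : IsOrderValuation R mR v)
    (S : Subring K) (hRS : R ≤ S) (hfracS : IsFractionRing S K)
    (mS : Ideal S) (hmS : IsMaxIdeal S mS)
    -- `S` birationally dominates `R`: `m_R ⊆ m_S`
    (hbir : ∀ r : R, r ∈ mR → (r : K) ∈ nonunitsIn S)
    -- the valuation ring `V` of `v` contains `S` ...
    (hSV : ∀ x : K, x ∈ S → x ≠ 0 → 0 ≤ v x)
    -- ... and dominates `S`: the maximal ideal `{v > 0}` of `V` contracts to `m_S`
    (hVdom : ∀ x : K, x ∈ S → x ≠ 0 → (0 < v x ↔ x ∈ nonunitsIn S))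
    (w : K → ℤ) (hw : IsOrderValuation S mS w) :
    (∀ x : K, x ≠ 0 → w x = v x) ∧
      {x : K | x = 0 ∨ 0 ≤ w x} = {x : K | x = 0 ∨ 0 ≤ v x} :=
  statement11_general R hfracR mR v hv S hRS mS hmS hbir hSV hVdom w hw
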